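/- arXiv:2307.16047 — 12 statements merged into one kernel-verified Lean document; each statement's English description precedes it below -/
import Mathlib

section
/- If a topological space X is a Q-space (every subset of X is a Gδ-set), then X is a Δ-space: for every decreasing sequence (Dₙ) of subsets of X with empty intersection there is a decreasing sequence (Vₙ) of open sets with Dₙ ⊆ Vₙ and ⋂ₙ Vₙ = ∅. -/
/-- A topological space is a Δ-space if every decreasing sequence of subsets with
empty intersection has a decreasing open expansion with empty intersection. -/
def IsDeltaSpace (X : Type*) [TopologicalSpace X] : Prop :=
  ∀ D : ℕ → Set X, (∀ n, D (n + 1) ⊆ D n) → (⋂ n, D n) = ∅ →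
    ∃ V : ℕ → Set X, (∀ n, IsOpen (V n)) ∧ (∀ n, V (n + 1) ⊆ V n) ∧
      (∀ n, D n ⊆ V n) ∧ (⋂ n, V n) = ∅

open Set

/-- Writing `D i = ⋂ j, U i j` with `U i j` open, the sets `V n = ⋂ i ≤ n, ⋂ j ≤ n, U i j` work:
`D n ⊆ D i ⊆ U i j` for `i, j ≤ n`, and a point of every `V n` lies in every `U i j`. -/
theorem exists_isOpen_antitone_superset_iInter_eq_of_isGδ {X : Type*} [TopologicalSpace X]
    {D : ℕ → Set X} (hD : Antitone D) (hGδ : ∀ n, IsGδ (D n)) :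
    ∃ V : ℕ → Set X, (∀ n, IsOpen (V n)) ∧ Antitone V ∧ (∀ n, D n ⊆ V n) ∧
      ⋂ n, V n = ⋂ n, D n := by
  choose U hUopen hUeq using fun i => isGδ_iff_eq_iInter_nat.mp (hGδ i)
  have hDV : ∀ n, D n ⊆ ⋂ i ≤ n, ⋂ j ≤ n, U i j := fun n => subset_iInter₂ fun i hi => by
    have hDi : D n ⊆ ⋂ j, U i j := hUeq i ▸ hD hi
    exact hDi.trans (subset_iInter₂ fun j _ => iInter_subset _ j)
  refine ⟨fun n => ⋂ i ≤ n, ⋂ j ≤ n, U i j, fun n => ?_, fun m n hmn => ?_, hDV, ?_⟩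
  · exact (finite_Iic n).isOpen_biInter fun i _ =>
      (finite_Iic n).isOpen_biInter fun j _ => hUopen i j
  · exact biInter_mono (Iic_subset_Iic.2 hmn) fun i _ =>
      biInter_mono (Iic_subset_Iic.2 hmn) fun j _ => Subset.rfl
  · refine (subset_iInter fun i => ?_).antisymm (iInter_mono hDV)
    rw [hUeq i]
    refine subset_iInter fun j => ?_
    calc ⋂ n, ⋂ i ≤ n, ⋂ j ≤ n, U i j
        ⊆ ⋂ i' ≤ max i j, ⋂ j' ≤ max i j, U i' j' := iInter_subset _ (max i j)
      _ ⊆ U i j := (iInter₂_subset i (le_max_left i j)).trans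
          (iInter₂_subset j (le_max_right i j))

/-- A Q-space (every subset is Gδ) is a Δ-space. -/
theorem q_space_is_delta_space {X : Type*} [TopologicalSpace X]
    (hQ : ∀ A : Set X, IsGδ A) : IsDeltaSpace X := by
  intro D hD hempty
  obtain ⟨V, hVopen, hVanti, hDV, hVD⟩ :=
    exists_isOpen_antitone_superset_iInter_eq_of_isGδ (antitone_nat_of_succ_le hD)
      fun n => hQ (D n)
  exact ⟨V, hVopen, fun n => hVanti n.le_succ, hDV, hVD.trans hempty⟩
end

section
/- If a topological space X is a countable union of closed discrete subspaces (σ-closed discrete), then X is a Q-space, i.e., every subset of X is a Gδ-set. -/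
open Set

/-- If `X` is a countable union of closed discrete subspaces, then every subset
of `X` is a Gδ-set (i.e. `X` is a Q-space). -/
theorem sigma_closed_discrete_is_q_space {X : Type*} [TopologicalSpace X]
    (D : ℕ → Set X) (hcover : (⋃ n, D n) = Set.univ)
    (hclosed : ∀ n, IsClosed (D n))
    (hdiscrete : ∀ n, DiscreteTopology (D n)) :
    ∀ A : Set X, IsGδ A := by
  intro A
  have hA : A = ⋂ n, (D n \ A)ᶜ := by
    rw [← compl_iUnion, ← iUnion_sdiff, hcover, compl_sdiff, compl_univ, union_empty]
  rw [hA]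
  refine .iInter_of_isOpen fun n => isOpen_compl_iff.mpr ?_
  exact isClosed_of_subset_discrete_closed sdiff_subset
    (isDiscrete_iff_discreteTopology.mpr (hdiscrete n)) (hclosed n)
end

section
/- Every subspace of a Δ-space is a Δ-space. -/
open Set

/- Push the sequence forward along `f`, expand it in `X`, and pull the expansion back;
injectivity keeps the intersection of the images empty. -/
theorem IsDeltaSpace.of_continuous_injective {X Y : Type*} [TopologicalSpace X]
    [TopologicalSpace Y] (hX : IsDeltaSpace X) {f : Y → X} (hcont : Continuous f)
    (hinj : Function.Injective f) : IsDeltaSpace Y := by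
  intro D hD hDempty
  have himage_empty : (⋂ n, f '' D n) = ∅ := by
    rw [← hinj.injOn.image_iInter_eq, hDempty, image_empty]
  obtain ⟨V, hVopen, hVanti, hDV, hVempty⟩ :=
    hX (fun n => f '' D n) (fun n => image_mono (hD n)) himage_empty
  refine ⟨fun n => f ⁻¹' V n, fun n => (hVopen n).preimage hcont,
    fun n => preimage_mono (hVanti n), fun n => image_subset_iff.mp (hDV n), ?_⟩
  rw [← preimage_iInter, hVempty, preimage_empty]

/-- Every subspace of a Δ-space is a Δ-space. -/
theorem subspace_of_delta_space {X : Type*} [TopologicalSpace X]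
    (hX : IsDeltaSpace X) (S : Set X) : IsDeltaSpace S :=
  hX.of_continuous_injective continuous_subtype_val Subtype.val_injective
end

section
/- A topological space X is a Δ-space if and only if every countable disjoint collection {Aₙ : n ∈ ω} of subsets of X admits a point-finite open expansion, i.e., open sets Uₙ ⊇ Aₙ such that every point of X lies in only finitely many Uₙ. -/
section TailUnions

open Set Filter Function

variable {α ι : Type*}

theorem iInter_biUnion_ge_eq_empty_iff (U : ℕ → Set α) :
    ⋂ n, ⋃ k ≥ n, U k = ∅ ↔ ∀ x, {n | x ∈ U n}.Finite := by
  have mem_iff (x : α) : x ∈ ⋂ n, ⋃ k ≥ n, U k ↔ {n | x ∈ U n}.Infinite := by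
    simp only [mem_iInter, mem_iUnion, exists_prop, ← Nat.frequently_atTop_iff_infinite,
      frequently_atTop]
  simp only [eq_empty_iff_forall_notMem, mem_iff, not_infinite]

theorem antitone_biUnion_ge (U : ℕ → Set α) : Antitone fun n => ⋃ k ≥ n, U k :=
  fun _ _ hmn => iUnion₂_mono' fun k hk => ⟨k, hmn.trans hk, subset_rfl⟩

theorem Pairwise.finite_setOf_mem {A : ι → Set α} (hA : Pairwise (Disjoint on A)) (x : α) :
    {n | x ∈ A n}.Finite :=
  Subsingleton.finite fun _ hm _ hn => by_contra fun hmn => (hA hmn).ne_of_mem hm hn rfl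

theorem Antitone.pairwise_disjoint_diff_succ {D : ℕ → Set α} (hD : Antitone D) :
    Pairwise (Disjoint on fun n => D n \ D (n + 1)) :=
  (pairwise_disjoint_on _).2 fun _ _ hmn =>
    disjoint_left.2 fun _ hxm hxn => hxm.2 (hD hmn hxn.1)

theorem Antitone.subset_biUnion_ge_diff_succ {D : ℕ → Set α} (hD : Antitone D)
    (hD_empty : ⋂ n, D n = ∅) (n : ℕ) : D n ⊆ ⋃ k ≥ n, D k \ D (k + 1) := by
  intro x hx
  by_contra hnot
  simp only [mem_iUnion, not_exists] at hnot
  have hx_tail : ∀ k ≥ n, x ∈ D k := fun k hk =>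
    Nat.le_induction hx (fun j hj hxj => by_contra fun hxj' => hnot j hj ⟨hxj, hxj'⟩) k hk
  exact eq_empty_iff_forall_notMem.1 hD_empty x
    (mem_iInter.2 fun k => hD (le_max_right n k) (hx_tail _ (le_max_left n k)))

end TailUnions

open Set

/-- `X` is a Δ-space iff every countable disjoint family of subsets of `X` has a
point-finite open expansion. -/
theorem delta_space_iff_point_finite_expansion {X : Type*} [TopologicalSpace X] :
    IsDeltaSpace X ↔
      ∀ A : ℕ → Set X, (Pairwise fun m n => Disjoint (A m) (A n)) →
        ∃ U : ℕ → Set X, (∀ n, IsOpen (U n)) ∧ (∀ n, A n ⊆ U n) ∧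
          ∀ x : X, {n | x ∈ U n}.Finite := by
  constructor
  · intro hΔ A hA
    obtain ⟨V, hV_open, hV_succ, hAV, hV_empty⟩ :=
      hΔ (fun n => ⋃ k ≥ n, A k) (fun n => antitone_biUnion_ge A n.le_succ)
        ((iInter_biUnion_ge_eq_empty_iff A).2 (Pairwise.finite_setOf_mem hA))
    have hV : Antitone V := antitone_nat_of_succ_le hV_succ
    refine ⟨V, hV_open, fun n => (subset_iUnion₂ (s := fun k (_ : k ≥ n) => A k) n le_rfl).trans
      (hAV n), ?_⟩
    have hV_tail (n : ℕ) : ⋃ k ≥ n, V k = V n := biSup_ge_eq_of_antitone hV n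
    rw [← iInter_biUnion_ge_eq_empty_iff]
    simpa only [hV_tail] using hV_empty
  · intro hpf D hD_succ hD_empty
    have hD : Antitone D := antitone_nat_of_succ_le hD_succ
    obtain ⟨U, hU_open, hAU, hU_fin⟩ := hpf _ hD.pairwise_disjoint_diff_succ
    exact ⟨fun n => ⋃ k ≥ n, U k, fun n => isOpen_iUnion fun k => isOpen_iUnion fun _ => hU_open k,
      fun n => antitone_biUnion_ge U n.le_succ,
      fun n => (hD.subset_biUnion_ge_diff_succ hD_empty n).trans (iUnion₂_mono fun k _ => hAU k),
      (iInter_biUnion_ge_eq_empty_iff U).2 hU_fin⟩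
end

section
/- If o(X)^{ℵ₀} ≤ |X|, where o(X) is the cardinality of the collection of open subsets of X, then X is not a Δ-space. -/
/-!
Embed the sequences of open sets into `X` by `e`. Let `Dₙ` consist of the points `e S` lying in
`S₀, …, Sₙ₋₁` but not in every `Sₖ`. By injectivity of `e` these sets have empty intersection.
If open sets `Vₙ ⊇ Dₙ` existed with `⋂ Vₙ = ∅`, then inductively `e V ∈ Dₙ ⊆ Vₙ` for every `n`,
so `e V ∈ ⋂ Vₙ`: a diagonal contradiction.
-/

open Cardinal

section Diagonal

variable {X ι : Type*} (c : ι → Set X) (e : (ℕ → ι) → X)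

def diagonalSets (n : ℕ) : Set X :=
  {x | ∃ S, e S = x ∧ (∀ k < n, x ∈ c (S k)) ∧ ∃ k, x ∉ c (S k)}

theorem diagonalSets_succ_subset (n : ℕ) : diagonalSets c e (n + 1) ⊆ diagonalSets c e n := by
  rintro x ⟨S, rfl, hmem, hnot⟩
  exact ⟨S, rfl, fun k hk => hmem k (hk.trans n.lt_succ_self), hnot⟩

theorem iInter_diagonalSets_eq_empty (he : Function.Injective e) :
    ⋂ n, diagonalSets c e n = ∅ := by
  refine Set.eq_empty_iff_forall_notMem.mpr fun x hx => ?_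
  obtain ⟨S, rfl, -, k, hk⟩ := Set.mem_iInter.mp hx 0
  obtain ⟨S', hS', hmem, -⟩ := Set.mem_iInter.mp hx (k + 1)
  rw [he hS'] at hmem
  exact hk (hmem k k.lt_succ_self)

theorem iInter_nonempty_of_diagonalSets_subset (S : ℕ → ι)
    (hS : ∀ n, diagonalSets c e n ⊆ c (S n)) : (⋂ n, c (S n)).Nonempty := by
  refine ⟨e S, Set.mem_iInter.mpr ?_⟩
  by_contra! hnot
  have ⟨k, hk⟩ := hnot
  exact hk (Nat.strong_induction_on k fun n ih => hS n ⟨S, rfl, ih, hnot⟩)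

end Diagonal

theorem not_isDeltaSpace_of_embedding {X : Type*} [TopologicalSpace X]
    (e : (ℕ → {U : Set X // IsOpen U}) ↪ X) : ¬ IsDeltaSpace X := by
  intro hΔ
  obtain ⟨V, hVopen, -, hDV, hVempty⟩ :=
    hΔ (diagonalSets Subtype.val e) (diagonalSets_succ_subset _ e)
      (iInter_diagonalSets_eq_empty _ e e.injective)
  have hVne := iInter_nonempty_of_diagonalSets_subset Subtype.val e (fun n => ⟨V n, hVopen n⟩) hDV
  exact hVne.ne_empty hVempty

/-- If `o(X)^ℵ₀ ≤ |X|`, where `o(X)` is the number of open subsets of `X`,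
then `X` is not a Δ-space. -/
theorem not_delta_of_opens_pow_aleph0_le {X : Type*} [TopologicalSpace X]
    (h : #{U : Set X // IsOpen U} ^ aleph0 ≤ #X) :
    ¬ IsDeltaSpace X := by
  have hcard : #(ℕ → {U : Set X // IsOpen U}) ≤ #X := by
    simpa [mk_arrow] using h
  exact not_isDeltaSpace_of_embedding (Cardinal.le_def _ _ |>.mp hcard).some
end

section
/- If X is a Baire space that can be partitioned into countably many dense subsets (ω-resolvable), then X is not a Δ-space. -/
theorem not_isDeltaSpace_of_antitone_dense {X : Type*} [TopologicalSpace X] [Nonempty X]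
    [BaireSpace X] {E : ℕ → Set X} (hanti : Antitone E) (hdense : ∀ n, Dense (E n))
    (hempty : ⋂ n, E n = ∅) : ¬ IsDeltaSpace X := by
  intro hΔ
  obtain ⟨V, hVopen, -, hEV, hVempty⟩ := hΔ E (fun n => hanti n.le_succ) hempty
  have hVdense : Dense (⋂ n, V n) :=
    dense_iInter_of_isOpen hVopen fun n => (hdense n).mono (hEV n)
  simpa [hVempty] using hVdense.nonempty

section Tails

variable {α : Type*} (D : ℕ → Set α)

theorem antitone_iUnion_ge : Antitone fun n => ⋃ m ≥ n, D m :=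
  fun _ _ hab => Set.biUnion_subset_biUnion_left fun _ hm => le_trans hab hm

theorem subset_iUnion_ge (n : ℕ) : D n ⊆ ⋃ m ≥ n, D m :=
  Set.subset_iUnion₂ (s := fun m (_ : m ≥ n) => D m) n le_rfl

theorem iInter_iUnion_ge_eq_empty_of_pairwise_disjoint
    (hdisj : Pairwise fun m n => Disjoint (D m) (D n)) :
    ⋂ n, ⋃ m ≥ n, D m = ∅ := by
  refine Set.eq_empty_of_forall_notMem fun x hx => ?_
  simp only [Set.mem_iInter, Set.mem_iUnion, exists_prop] at hx
  obtain ⟨k, -, hxk⟩ := hx 0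
  obtain ⟨m, hkm, hxm⟩ := hx (k + 1)
  exact Set.disjoint_left.mp (hdisj (by omega : k ≠ m)) hxk hxm

end Tails

theorem baire_omega_resolvable_not_delta_general {X : Type*} [TopologicalSpace X]
    [Nonempty X] [BaireSpace X]
    (D : ℕ → Set X) (hdense : ∀ n, Dense (D n))
    (hdisj : Pairwise fun m n => Disjoint (D m) (D n)) :
    ¬ IsDeltaSpace X :=
  not_isDeltaSpace_of_antitone_dense (antitone_iUnion_ge D)
    (fun n => (hdense n).mono (subset_iUnion_ge D n))
    (iInter_iUnion_ge_eq_empty_of_pairwise_disjoint D hdisj)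

/-- A nonempty Baire space which is partitioned into countably many pairwise
disjoint dense subsets is not a Δ-space. -/
theorem baire_omega_resolvable_not_delta {X : Type*} [TopologicalSpace X]
    [Nonempty X] [BaireSpace X]
    (D : ℕ → Set X) (hdense : ∀ n, Dense (D n))
    (hdisj : Pairwise fun m n => Disjoint (D m) (D n))
    (hcover : (⋃ n, D n) = Set.univ) :
    ¬ IsDeltaSpace X :=
  baire_omega_resolvable_not_delta_general D hdense hdisj
end

section
/- Let S be a stationary subset of ω₁ with the subspace order topology. Then S, viewed as a topological space, is not a Δ-space. More precisely, if S is partitioned into countably many stationary subsets Sₙ of its set of limit points, then the family {Sₙ} admits no point-finite open expansion in S. -/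
noncomputable def omega1 : Ordinal := (Cardinal.aleph 1).ord

/-- `C` is a club (closed unbounded set) in `ω₁`. -/
def IsClubInOmega1 (C : Set Ordinal) : Prop :=
  C ⊆ Set.Iio omega1 ∧
  (∀ o < omega1, ∃ c ∈ C, o ≤ c) ∧
  (∀ o, o < omega1 → Order.IsSuccLimit o → (∀ p < o, ∃ c ∈ C, p < c ∧ c < o) → o ∈ C)

/-- `S ⊆ ω₁` is stationary: it meets every club in `ω₁`. -/
def IsStationaryInOmega1 (S : Set Ordinal) : Prop :=
  S ⊆ Set.Iio omega1 ∧ ∀ C, IsClubInOmega1 C → (S ∩ C).Nonempty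

/-!
An open set containing a stationary subset of `ω₁` contains a final segment: otherwise its
complement would be a club missing the stationary set. Countably many final segments meet in a
club, which `S` meets, so an open expansion of countably many stationary sets has a point common
to all its members and cannot be point-finite.

For the Δ-property, split `S` into disjoint stationary sets `Tₖ` by Ulam's argument: inject
every initial segment `[0, α]` into `ℕ`; for each `β` the sets `{α ∈ S | α ≥ β, β has index n in
[0, α]}` cover `S ∩ [β, ω₁)`, so one of them is stationary, and a single `n` serves infinitely many
`β`, giving pairwise disjoint stationary sets. The tails `⋃_{k ≥ n} Tₖ` decrease to `∅`, yet any
open expansions of them have a common point.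
-/

open Cardinal Function Order Set

universe u

section WellOrder

variable {α : Type*} [LinearOrder α]

theorem IsClosed.dirSupClosed [TopologicalSpace α] [OrderTopology α] {s : Set α}
    (hs : IsClosed s) : DirSupClosed s :=
  fun _ hds hne _ _ ha => hs.closure_subset_iff.2 hds (ha.mem_closure hne)

theorem isClub_Ici (a : α) : IsClub (Ici a) :=
  ⟨(isUpperSet_Ici a).dirSupClosed, fun b => ⟨max a b, le_max_left a b, le_max_right a b⟩⟩

theorem IsStationary.exists_Ici_subset_of_isOpen [TopologicalSpace α] [OrderTopology α]
    {s U : Set α} (hs : IsStationary s) (hU : IsOpen U) (hsU : s ⊆ U) : ∃ a, Ici a ⊆ U := by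
  by_contra! h
  have hclub : IsClub Uᶜ :=
    ⟨hU.isClosed_compl.dirSupClosed, fun a =>
      let ⟨y, hay, hyU⟩ := not_subset.1 (h a)
      ⟨y, hyU, hay⟩⟩
  obtain ⟨x, hxs, hxU⟩ := hs hclub
  exact hxU (hsU hxs)

variable [WellFoundedLT α]

theorem IsStationary.inter_isClub (hα : cof α ≠ ℵ₀) {s t : Set α} (hs : IsStationary s)
    (ht : IsClub t) : IsStationary (s ∩ t) :=
  fun _ hu => by simpa only [inter_assoc] using hs (ht.inter hα hu)

theorem IsStationary.inter_iInter_nonempty_of_isOpen [TopologicalSpace α] [OrderTopology α]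
    (hα : cof α ≠ ℵ₀) {ι : Sort*} [Countable ι] {s : Set α} {Y V : ι → Set α}
    (hs : IsStationary s) (hY : ∀ i, IsStationary (Y i)) (hV : ∀ i, IsOpen (V i))
    (hYV : ∀ i, Y i ⊆ V i) : (s ∩ ⋂ i, V i).Nonempty := by
  choose a ha using fun i => (hY i).exists_Ici_subset_of_isOpen (hV i) (hYV i)
  obtain ⟨x, hxs, hx⟩ := hs (IsClub.iInter_of_countable hα fun i => isClub_Ici (a i))
  exact ⟨x, hxs, mem_iInter.2 fun i => ha i (mem_iInter.1 hx i)⟩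

theorem IsStationary.exists_pairwise_disjoint [Uncountable α] (hα : cof α ≠ ℵ₀)
    (hIic : ∀ a : α, (Iic a).Countable) {s : Set α} (hs : IsStationary s) :
    ∃ T : ℕ → Set α, (∀ n, T n ⊆ s) ∧ (∀ n, IsStationary (T n)) ∧ Pairwise (Disjoint on T) := by
  have (a : α) : Countable (Iic a) := (hIic a).to_subtype
  choose e he using fun a : α => exists_injective_nat (Iic a)
  let A (n : ℕ) (b : α) : Set α := {a ∈ s | ∃ h : b ≤ a, e a ⟨b, h⟩ = n}
  have hA (b : α) : ∃ n, IsStationary (A n b) := by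
    have hcover : s ∩ Ici b = ⋃ n, A n b := by
      ext a
      simp only [mem_inter_iff, mem_Ici, mem_iUnion, mem_ofPred_eq, A]
      exact ⟨fun ⟨has, hba⟩ => ⟨_, has, hba, rfl⟩, fun ⟨_, has, hba, _⟩ => ⟨has, hba⟩⟩
    rw [← isStationary_iUnion_iff_of_countable hα, ← hcover]
    exact hs.inter_isClub hα (isClub_Ici b)
  choose N hN using hA
  obtain ⟨n, hn⟩ : ∃ n, (N ⁻¹' {n}).Infinite := by
    by_contra! h
    have : (⋃ n, N ⁻¹' {n}).Countable := countable_iUnion fun n => (h n).countable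
    rw [← preimage_iUnion, iUnion_of_singleton, preimage_univ, countable_univ_iff] at this
    exact not_countable this
  let b := hn.natEmbedding
  refine ⟨fun k => A n (b k), fun k a ha => ha.1, fun k => ?_, ?_⟩
  · convert hN (b k)
    exact (b k).2.symm
  · intro k l hkl
    refine disjoint_left.2 fun a ⟨_, _, hk⟩ ⟨_, _, hl⟩ => hkl (b.injective ?_)
    exact Subtype.ext (congrArg (fun c : Iic a => (c : α)) (he a (hk.trans hl.symm)))

end WellOrder

theorem cof_Iio_omega1_ne_aleph0 : cof (Iio omega1) ≠ ℵ₀ := by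
  rw [Ordinal.cof_Iio, omega1, ord_aleph, Ordinal.lift_omega, Ordinal.lift_one, cof_omega_one]
  exact aleph0_lt_aleph_one.ne'

theorem countable_Iio_of_lt_omega1 {o : Ordinal.{u}} (ho : o < omega1) : (Iio o).Countable := by
  rw [← le_aleph0_iff_set_countable, mk_Iio_ordinal, ← lift_aleph0.{u + 1, u}, lift_le]
  exact lt_aleph_one_iff.1 (lt_ord.1 ho)

theorem countable_Iic_omega1 (a : Iio omega1) : (Iic a).Countable := by
  have hsucc : Order.succ (a : Ordinal) < omega1 :=
    (isSuccLimit_ord (aleph0_le_aleph 1)).succ_lt a.2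
  refine ((countable_Iio_of_lt_omega1 hsucc).preimage Subtype.val_injective).mono ?_
  exact fun b (hb : b ≤ a) => show (b : Ordinal) < succ (a : Ordinal) from lt_succ_of_le hb

instance : Uncountable (Iio omega1) := by
  rw [← aleph0_lt_mk_iff, mk_Iio_ordinal, omega1, card_ord]
  simp

theorem dirSupClosed_preimage_val_Iio_iff {θ : Ordinal} {C : Set Ordinal} :
    DirSupClosed (Subtype.val ⁻¹' C : Set (Iio θ)) ↔
      ∀ o, o < θ → IsSuccLimit o → (∀ p < o, ∃ c ∈ C, p < c ∧ c < o) → o ∈ C := by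
  rw [dirSupClosed_iff_of_linearOrder]
  constructor
  · intro hC o ho hlim hacc
    let d : Set (Iio θ) := {c | (c : Ordinal) ∈ C ∧ (c : Ordinal) < o}
    have hd : IsLUB d ⟨o, ho⟩ := by
      refine ⟨fun c hc => hc.2.le, fun b hb => ?_⟩
      by_contra! hob
      obtain ⟨c, hcC, hbc, hco⟩ := hacc b hob
      have hcd : (⟨c, hco.trans ho⟩ : Iio θ) ∈ d := ⟨hcC, hco⟩
      exact (hb hcd).not_gt hbc
    obtain ⟨c, hcC, -, hco⟩ := hacc 0 hlim.pos
    have hdC : d ⊆ Subtype.val ⁻¹' C := fun c hc => hc.1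
    exact hC hdC ⟨⟨c, hco.trans ho⟩, hcC, hco⟩ hd
  · intro h d hdC ⟨x, hxd⟩ a ha
    by_cases had : a ∈ d
    · exact hdC had
    have hacc (p : Ordinal) (hpa : p < a) : ∃ c ∈ C, p < c ∧ c < a := by
      obtain ⟨c, hcd, hpc, hca⟩ := ha.exists_between (b := ⟨p, hpa.trans a.2⟩) hpa
      have hca : c < a := lt_of_le_of_ne hca (ne_of_mem_of_not_mem hcd had)
      exact ⟨c, hdC hcd, hpc, hca⟩
    have hxa : x < a := lt_of_le_of_ne (ha.1 hxd) (ne_of_mem_of_not_mem hxd had)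
    have hlim : IsSuccLimit (a : Ordinal) := by
      refine Ordinal.isSuccLimit_iff.2 ⟨(zero_le.trans_lt (Subtype.coe_lt_coe.2 hxa)).ne', ?_⟩
      intro p hpa
      obtain ⟨c, -, hpc, hca⟩ := hacc p hpa.lt
      exact hpa.2 hpc hca
    exact h a a.2 hlim hacc

theorem isClubInOmega1_iff {C : Set Ordinal} (hC : C ⊆ Iio omega1) :
    IsClubInOmega1 C ↔ IsClub (Subtype.val ⁻¹' C : Set (Iio omega1)) := by
  have hcof : (∀ o < omega1, ∃ c ∈ C, o ≤ c) ↔ IsCofinal (Subtype.val ⁻¹' C : Set (Iio omega1)) :=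
    ⟨fun h a => let ⟨c, hc, hac⟩ := h a a.2; ⟨⟨c, hC hc⟩, hc, hac⟩,
      fun h o ho => let ⟨c, hc, hoc⟩ := h ⟨o, ho⟩; ⟨c, hc, hoc⟩⟩
  rw [IsClubInOmega1, isClub_iff, hcof, dirSupClosed_preimage_val_Iio_iff]
  simp only [hC, true_and, and_comm]

theorem isStationaryInOmega1_iff {S : Set Ordinal} (hS : S ⊆ Iio omega1) :
    IsStationaryInOmega1 S ↔ IsStationary (Subtype.val ⁻¹' S : Set (Iio omega1)) := by
  refine ⟨fun h t ht => ?_, fun h => ⟨hS, fun C hC => ?_⟩⟩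
  · have hC : IsClubInOmega1 (Subtype.val '' t) := by
      rwa [isClubInOmega1_iff (image_subset_iff.2 fun a _ => a.2),
        Subtype.val_injective.preimage_image]
    obtain ⟨_, hxS, y, hyt, rfl⟩ := h.2 _ hC
    exact ⟨y, hxS, hyt⟩
  · obtain ⟨y, hyS, hyC⟩ := h ((isClubInOmega1_iff hC.1).1 hC)
    exact ⟨y, hyS, hyC⟩

theorem IsStationaryInOmega1.exists_pairwise_disjoint {S : Set Ordinal}
    (hS : IsStationaryInOmega1 S) :
    ∃ T : ℕ → Set Ordinal, (∀ n, T n ⊆ S) ∧ (∀ n, IsStationaryInOmega1 (T n)) ∧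
      Pairwise (Disjoint on T) := by
  obtain ⟨T, hTS, hT, hdisj⟩ := ((isStationaryInOmega1_iff hS.1).1 hS).exists_pairwise_disjoint
    cof_Iio_omega1_ne_aleph0 countable_Iic_omega1
  refine ⟨fun n => Subtype.val '' T n, fun n => image_subset_iff.2 (hTS n), fun n => ?_,
    fun k l hkl => (disjoint_image_iff Subtype.val_injective).2 (hdisj hkl)⟩
  rw [isStationaryInOmega1_iff (image_subset_iff.2 fun a _ => a.2),
    Subtype.val_injective.preimage_image]
  exact hT n

theorem IsStationaryInOmega1.exists_forall_mem_of_isOpen {S : Set Ordinal}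
    (hS : IsStationaryInOmega1 S) {U : ℕ → Set S} (hU : ∀ n, IsOpen (U n))
    {Y : ℕ → Set Ordinal} (hY : ∀ n, IsStationaryInOmega1 (Y n)) (hYS : ∀ n, Y n ⊆ S)
    (hYU : ∀ n, {x : S | (x : Ordinal) ∈ Y n} ⊆ U n) : ∃ x : S, ∀ n, x ∈ U n := by
  choose W hW hWU using fun n => isOpen_induced_iff.1 (hU n)
  have hYW (n : ℕ) : (Subtype.val ⁻¹' Y n : Set (Iio omega1)) ⊆ Subtype.val ⁻¹' W n :=
    fun y hy => show (⟨y, hYS n hy⟩ : S) ∈ Subtype.val ⁻¹' W n from (hWU n).symm ▸ hYU n hy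
  obtain ⟨y, hyS, hyW⟩ := ((isStationaryInOmega1_iff hS.1).1 hS).inter_iInter_nonempty_of_isOpen
    cof_Iio_omega1_ne_aleph0 (fun n => (isStationaryInOmega1_iff (hY n).1).1 (hY n))
    (fun n => (hW n).preimage continuous_subtype_val) hYW
  exact ⟨⟨y, hyS⟩, fun n => hWU n ▸ mem_iInter.1 hyW n⟩

/-- A stationary subset `S` of `ω₁` (with the subspace topology coming from the
order topology on the ordinals) is not a Δ-space; more precisely, any countable
disjoint family of stationary subsets of `S` consisting of limit points of `S`
admits no point-finite open expansion in `S`. -/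
theorem stationary_not_delta_space (S : Set Ordinal)
    (hS : IsStationaryInOmega1 S) :
    (¬ IsDeltaSpace S) ∧
      ∀ Sn : ℕ → Set Ordinal,
        (∀ n, Sn n ⊆ S) →
        (∀ n, IsStationaryInOmega1 (Sn n)) →
        (∀ n, ∀ α ∈ Sn n, ∀ β < α, ∃ γ ∈ S, β < γ ∧ γ < α) →
        (Pairwise fun m n => Disjoint (Sn m) (Sn n)) →
        ¬ ∃ U : ℕ → Set S, (∀ n, IsOpen (U n)) ∧
            (∀ n, {x : S | (x : Ordinal) ∈ Sn n} ⊆ U n) ∧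
            ∀ x : S, {n | x ∈ U n}.Finite := by
  constructor
  · intro hΔ
    obtain ⟨T, hTS, hT, hdisj⟩ := hS.exists_pairwise_disjoint
    let D (n : ℕ) : Set S := {x | ∃ k ≥ n, (x : Ordinal) ∈ T k}
    have hD_anti (n : ℕ) : D (n + 1) ⊆ D n := fun x ⟨k, hk, hx⟩ => ⟨k, by omega, hx⟩
    have hD_empty : ⋂ n, D n = ∅ := by
      refine eq_empty_of_forall_notMem fun x hx => ?_
      obtain ⟨k, -, hxk⟩ := mem_iInter.1 hx 0
      obtain ⟨l, hkl, hxl⟩ := mem_iInter.1 hx (k + 1)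
      exact disjoint_left.1 (hdisj (show k ≠ l by omega)) hxk hxl
    obtain ⟨V, hV, -, hDV, hV_empty⟩ := hΔ D hD_anti hD_empty
    obtain ⟨x, hx⟩ :=
      hS.exists_forall_mem_of_isOpen hV hT hTS fun n x hx => hDV n ⟨n, le_rfl, hx⟩
    exact (hV_empty ▸ mem_iInter.2 hx : x ∈ (∅ : Set S))
  · rintro Sn hSnS hSn - - ⟨U, hU, hSnU, hfin⟩
    obtain ⟨x, hx⟩ := hS.exists_forall_mem_of_isOpen hU hSn hSnS hSnU
    exact infinite_univ ((hfin x).subset fun n _ => hx n)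
end

section
/- If X is a nonstationary subset of ω₁ with the subspace order topology, then X is a Q-space: every subset of X is a Gδ-set in X. -/
/-!
The complement of a club `C` in `ω₁` splits into the gaps between consecutive points of `C`:
`x ∉ C` lies in the gap below the least element of `C` above `x`. Each gap is countable, and it is
open because a limit ordinal `o < ω₁` outside `C` is not a limit of `C`, so some interval `(p, o)`
misses `C`. A T1 space partitioned into countable open pieces is a Q-space: inside one piece, a
subset is the piece minus countably many closed points, and the Gδ presentations of the pieces
glue together because the pieces are disjoint and open.
-/

open Set

section PartitionIntoOpenPieces

variable {X ι : Type*} [TopologicalSpace X]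

theorem IsGδ.of_isGδ_inter_fibers (f : X → ι) (hf : ∀ i, IsOpen (f ⁻¹' {i})) {A : Set X}
    (hA : ∀ i, IsGδ (A ∩ f ⁻¹' {i})) : IsGδ A := by
  choose U hU hAU using fun i => isGδ_iff_eq_iInter_nat.1 (hA i)
  have hA_eq : A = ⋂ n, ⋃ i, f ⁻¹' {i} ∩ U i n := by
    ext x
    simp only [mem_iInter, mem_iUnion, mem_inter_iff, mem_preimage, mem_singleton_iff]
    constructor
    · intro hx n
      have hx' : x ∈ ⋂ n, U (f x) n := hAU (f x) ▸ ⟨hx, rfl⟩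
      exact ⟨f x, rfl, mem_iInter.1 hx' n⟩
    · intro hx
      have hx' : x ∈ ⋂ n, U (f x) n := mem_iInter.2 fun n => by
        obtain ⟨i, rfl, hxi⟩ := hx n
        exact hxi
      exact (hAU (f x) ▸ hx').1
  rw [hA_eq]
  exact .iInter fun n => (isOpen_iUnion fun i => (hf i).inter (hU i n)).isGδ

theorem isGδ_of_countable_isOpen_fibers [T1Space X] (f : X → ι) (hopen : ∀ i, IsOpen (f ⁻¹' {i}))
    (hcount : ∀ i, (f ⁻¹' {i}).Countable) (A : Set X) : IsGδ A := by
  refine .of_isGδ_inter_fibers f hopen fun i => ?_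
  have h_eq : A ∩ f ⁻¹' {i} = f ⁻¹' {i} ∩ (f ⁻¹' {i} \ A)ᶜ := by
    ext x
    simp only [mem_inter_iff, mem_compl_iff, mem_sdiff]
    tauto
  rw [h_eq]
  exact (hopen i).isGδ.inter ((hcount i).mono sdiff_subset).isGδ_compl

end PartitionIntoOpenPieces

section GapsOfAClub

def gapBelow (C : Set Ordinal) (c : Ordinal) : Set Ordinal :=
  {x | x ∉ C ∧ IsLeast {d | d ∈ C ∧ x < d} c}

variable {C : Set Ordinal} {c x : Ordinal}

theorem gapBelow_subset_Iio : gapBelow C c ⊆ Iio c :=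
  fun _ hx => hx.2.1.2

theorem eq_of_mem_gapBelow {c' : Ordinal} (h : x ∈ gapBelow C c) (h' : x ∈ gapBelow C c') :
    c = c' :=
  h.2.unique h'.2

theorem countable_Iio_of_lt_omega1_s8 (hc : c < omega1) : (Iio c).Countable := by
  rw [← Cardinal.le_aleph0_iff_set_countable, Cardinal.mk_Iio_ordinal, Cardinal.lift_le_aleph0,
    ← Cardinal.lt_aleph_one_iff]
  exact Cardinal.lt_ord.1 hc

theorem countable_gapBelow (hC : C ⊆ Iio omega1) (c : Ordinal) : (gapBelow C c).Countable := by
  rcases (gapBelow C c).eq_empty_or_nonempty with h | ⟨x, hx⟩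
  · simp [h]
  · exact (countable_Iio_of_lt_omega1_s8 (hC hx.2.1.1)).mono gapBelow_subset_Iio

theorem isOpen_gapBelow (hC : IsClubInOmega1 C) (c : Ordinal) : IsOpen (gapBelow C c) := by
  refine SuccOrder.isOpen_iff.2 fun o ho hlim => ?_
  have ho_lt : o < omega1 := (gapBelow_subset_Iio ho).trans (hC.1 ho.2.1.1)
  obtain ⟨p, hpo, hp⟩ : ∃ p < o, ∀ d ∈ C, p < d → o ≤ d := by
    by_contra! h
    exact ho.1 (hC.2.2 o ho_lt hlim h)
  refine ⟨p, hpo, fun x ⟨hpx, hxo⟩ => ⟨fun hxC => (hp x hxC hpx).not_gt hxo, ?_⟩⟩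
  refine ⟨⟨ho.2.1.1, hxo.trans ho.2.1.2⟩, fun d ⟨hdC, hxd⟩ => ho.2.2 ⟨hdC, ?_⟩⟩
  exact (hp d hdC (hpx.trans hxd)).lt_of_ne fun h => ho.1 (h ▸ hdC)

theorem exists_mem_gapBelow (hC : IsClubInOmega1 C) (hx : x < omega1) (hxC : x ∉ C) :
    ∃ c, x ∈ gapBelow C c := by
  obtain ⟨d, hdC, hxd⟩ := hC.2.1 x hx
  have hne : {d | d ∈ C ∧ x < d}.Nonempty :=
    ⟨d, hdC, hxd.lt_of_ne fun h => hxC (h ▸ hdC)⟩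
  exact ⟨_, hxC, csInf_mem hne, fun _ hd => csInf_le' hd⟩

end GapsOfAClub

/-- A nonstationary subset of `ω₁` (with the subspace topology) is a Q-space:
every subset of it is a Gδ-set. -/
theorem nonstationary_is_q_space (X : Set Ordinal)
    (hX : X ⊆ Set.Iio omega1)
    (hns : ∃ C, IsClubInOmega1 C ∧ Disjoint X C) :
    ∀ A : Set X, IsGδ A := by
  obtain ⟨C, hC, hdisj⟩ := hns
  choose gap hgap using fun x : X => exists_mem_gapBelow hC (hX x.2) (disjoint_left.1 hdisj x.2)
  have hfiber : ∀ c, gap ⁻¹' {c} = Subtype.val ⁻¹' gapBelow C c := fun c => by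
    ext x
    exact ⟨fun hx => hx ▸ hgap x, fun hx => eq_of_mem_gapBelow (hgap x) hx⟩
  refine isGδ_of_countable_isOpen_fibers gap (fun c => ?_) (fun c => ?_)
  · exact hfiber c ▸ (isOpen_gapBelow hC c).preimage continuous_subtype_val
  · exact hfiber c ▸ (countable_gapBelow hC.1 c).preimage Subtype.val_injective
end

section
/- If a topological space X admits a point-finite neighborhood assignment and F ⊆ X is a set of points each of which is a Gδ-point of X, then F is a Gδ-set in X. -/
/-!
Write each `{x}`, `x ∈ F`, as the intersection of a decreasing sequence of open sets `V x n`
and put `W n = ⋃ x ∈ F, N x ∩ V x n`. A point `u` lying in every `W n` lies in some `N x`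
with `u ∈ V x n` for each `n`; since only finitely many `N x` contain `u`, one `x` serves for
infinitely many, hence (the `V x n` decreasing) for all `n`, so `u = x ∈ F`.
-/

open Filter Set

theorem Set.Finite.exists_forall_of_forall_exists_antitone {α ι : Type*} [SemilatticeSup ι]
    [Nonempty ι] {S : Set α} (hS : S.Finite) {P : α → ι → Prop} (hP : ∀ x ∈ S, Antitone (P x))
    (h : ∀ i, ∃ x ∈ S, P x i) : ∃ x ∈ S, ∀ i, P x i := by
  by_contra! hne
  have hev : ∀ᶠ i in atTop, ∀ x ∈ S, ¬P x i := by
    refine (eventually_all_finite hS).2 fun x hx => ?_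
    obtain ⟨i, hi⟩ := hne x hx
    exact eventually_atTop.2 ⟨i, fun j hij hj => hi (hP x hx hij hj)⟩
  obtain ⟨i, hi⟩ := hev.exists
  obtain ⟨x, hx, hPx⟩ := h i
  exact hi x hx hPx

theorem IsGδ.exists_antitone_isOpen_iInter_eq {X : Type*} [TopologicalSpace X] {s : Set X}
    (hs : IsGδ s) : ∃ V : ℕ → Set X, Antitone V ∧ (∀ n, IsOpen (V n)) ∧ ⋂ n, V n = s := by
  obtain ⟨U, hUopen, rfl⟩ := hs.eq_iInter_nat
  refine ⟨fun n => ⋂ i ∈ Iic n, U i, fun m n hmn => ?_, fun n => ?_, ?_⟩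
  · exact biInter_subset_biInter_left (Iic_subset_Iic.2 hmn)
  · exact (finite_Iic n).isOpen_biInter fun i _ => hUopen i
  · ext u
    simp only [mem_iInter, mem_Iic]
    exact ⟨fun hu i => hu i i le_rfl, fun hu _ i _ => hu i⟩

theorem eq_iInter_biUnion_inter_of_pointFinite {X : Type*} {F : Set X} {N : X → Set X}
    (hmem : ∀ x ∈ F, x ∈ N x) (hpf : ∀ u, {x | u ∈ N x}.Finite) {V : X → ℕ → Set X}
    (hV : ∀ x ∈ F, Antitone (V x)) (hVx : ∀ x ∈ F, ⋂ n, V x n = {x}) :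
    F = ⋂ n, ⋃ x ∈ F, N x ∩ V x n := by
  refine Subset.antisymm (fun x hx => mem_iInter.2 fun n => mem_biUnion hx ⟨hmem x hx, ?_⟩)
    fun u hu => ?_
  · exact mem_iInter.1 ((hVx x hx).symm ▸ mem_singleton x) n
  · have hS : (F ∩ {x | u ∈ N x}).Finite := (hpf u).subset inter_subset_right
    obtain ⟨x, ⟨hxF, -⟩, hux⟩ := hS.exists_forall_of_forall_exists_antitone
      (P := fun x n => u ∈ V x n) (fun x hx _ _ hmn h => hV x hx.1 hmn h) fun n => by
        obtain ⟨x, hxF, huN, huV⟩ := mem_iUnion₂.1 (mem_iInter.1 hu n)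
        exact ⟨x, ⟨hxF, huN⟩, huV⟩
    have hu_eq : u ∈ ({x} : Set X) := hVx x hxF ▸ mem_iInter.2 hux
    exact (mem_singleton_iff.1 hu_eq).symm ▸ hxF

/-- If `X` admits a point-finite neighborhood assignment and `F ⊆ X` consists of
Gδ-points of `X`, then `F` is a Gδ-set in `X`. -/
theorem gdelta_of_point_finite_neighborhood_assignment {X : Type*}
    [TopologicalSpace X] (N : X → Set X)
    (hopen : ∀ x, IsOpen (N x)) (hmem : ∀ x, x ∈ N x)
    (hpf : ∀ u : X, {x : X | u ∈ N x}.Finite)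
    (F : Set X) (hF : ∀ x ∈ F, IsGδ ({x} : Set X)) :
    IsGδ F := by
  choose! V hVanti hVopen hVeq using fun x hx => (hF x hx).exists_antitone_isOpen_iInter_eq
  rw [eq_iInter_biUnion_inter_of_pointFinite (fun x _ => hmem x) hpf hVanti hVeq]
  exact .iInter_of_isOpen fun n => isOpen_biUnion fun x hx => (hopen x).inter (hVopen x hx n)
end

section
/- No Souslin tree, equipped with the interval topology, is a Δ-space. -/
/-- Data exhibiting a partial order `T` as a Souslin tree of height `ω₁`:
the predecessors of any point form a chain enumerated by the height function,
there is a point at every level `β < ω₁`, and all levels, chains and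
antichains are countable. -/
structure SouslinTreeData.{u_1, u_2} (T : Type u_1) [PartialOrder T] where
  height : T → Ordinal.{u_2}
  height_lt : ∀ t, height t < omega1
  height_mono : ∀ s t : T, s < t → height s < height t
  pred_linear : ∀ t s₁ s₂ : T, s₁ < t → s₂ < t → s₁ ≤ s₂ ∨ s₂ ≤ s₁
  pred_exists : ∀ t : T, ∀ β < height t, ∃ s, s < t ∧ height s = β
  height_surj : ∀ β < omega1, ∃ t : T, height t = β
  levels_countable : ∀ β : Ordinal, {t : T | height t = β}.Countable
  chains_countable : ∀ C : Set T, IsChain (· ≤ ·) C → C.Countable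
  antichains_countable : ∀ A : Set T,
    (A.Pairwise fun a b => ¬ a ≤ b ∧ ¬ b ≤ a) → A.Countable

/-- The interval topology on a tree, generated by the half-open intervals
`(s, t]` together with the singletons of minimal elements. -/
def intervalTopology (T : Type*) [PartialOrder T] : TopologicalSpace T :=
  TopologicalSpace.generateFrom
    ({U | ∃ s t : T, U = {x | s < x ∧ x ≤ t}} ∪
     {U | ∃ t : T, (∀ s, ¬ s < t) ∧ U = {t}})

/-!
Split `ω₁` into countably many disjoint stationary sets and let `Sₙ` be the union of those of
index `≥ n`; the sets `Dₙ` of points with level in `Sₙ` decrease to `∅`. If open `Vₙ ⊇ Dₙ` had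
empty intersection, some `Vₙᶜ` would be uncountable; thin it to a set `A` every point of which
has uncountably many successors in `A`. Since antichains are countable, a closing-off argument
over the stationary set `Sₙ` finds a point `x` at a level in `Sₙ`, hence in `Vₙ`, with points of
`A ⊆ Vₙᶜ` cofinal below it, while openness puts an interval `(s, x]` inside `Vₙ`.
-/
open Cardinal Function Set Topology

universe u

abbrev CountableOrdinal : Type (u + 1) := Iio (omega1 : Ordinal.{u})

theorem isClub_Ioi {α : Type*} [LinearOrder α] [NoMaxOrder α] (a : α) : IsClub (Ioi a) where
  dirSupClosed _ hd := fun ⟨_, hx⟩ _ _ hb => (hd hx).trans_le (hb.1 hx)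
  isCofinal b :=
    let ⟨c, hc⟩ := exists_gt (max a b)
    ⟨c, (le_max_left a b).trans_lt hc, (le_max_right a b).trans hc.le⟩

namespace CountableOrdinal

theorem omega1_eq : (omega1 : Ordinal.{u}) = Ordinal.omega 1 := ord_aleph 1

theorem cof_eq : Order.cof CountableOrdinal.{u} = ℵ₁ := by
  simp [Ordinal.cof_Iio, omega1_eq]

theorem cof_ne_aleph0 : Order.cof CountableOrdinal.{u} ≠ ℵ₀ :=
  cof_eq ▸ aleph0_lt_aleph_one.ne'

theorem countable_Iio (a : CountableOrdinal.{u}) : (Iio a).Countable := by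
  have : (Iio a.1).Countable := by
    rw [← le_aleph0_iff_set_countable, mk_Iio_ordinal, lift_le_aleph0, ← lt_aleph_one_iff,
      ← lt_ord]
    exact a.2
  exact this.preimage Subtype.val_injective

theorem exists_gt_of_countable {s : Set CountableOrdinal.{u}} (hs : s.Countable) :
    ∃ b, ∀ a ∈ s, a < b := by
  have : ¬ IsCofinal s := fun h => (Order.cof_le h).not_gt <|
    cof_eq ▸ lt_aleph_one_iff.2 (le_aleph0_iff_set_countable.2 hs)
  simpa [not_isCofinal_iff] using this

instance : NoMaxOrder CountableOrdinal.{u} :=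
  ⟨fun a => let ⟨b, hb⟩ := exists_gt_of_countable (countable_singleton a); ⟨b, hb a rfl⟩⟩

instance : Nonempty CountableOrdinal.{u} :=
  ⟨⟨Ordinal.omega0, omega1_eq ▸ Ordinal.omega0_lt_omega_one⟩⟩

theorem not_countable_univ : ¬ (univ : Set CountableOrdinal.{u}).Countable := fun h =>
  let ⟨b, hb⟩ := exists_gt_of_countable h; (hb b trivial).false

theorem isClub_setOf_forall_lt (f : CountableOrdinal.{u} → CountableOrdinal.{u}) :
    IsClub {l | ∀ γ < l, f γ < l} where
  dirSupClosed d hd _ _ a ha γ hγ := by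
    obtain ⟨l, hl, hγl⟩ := (lt_isLUB_iff ha).1 hγ
    exact (hd hl γ hγl).trans_le (ha.1 hl)
  isCofinal a := by
    choose next hnext using fun b : CountableOrdinal.{u} =>
      exists_gt_of_countable (((countable_Iio b).image f).insert b)
    let seq : ℕ → CountableOrdinal.{u} := fun n => next^[n] a
    have hseq : ∀ n, seq (n + 1) = next (seq n) := fun n => iterate_succ_apply' next n a
    have hlt : (⨆ n, (seq n).1) < omega1 := by
      simpa only [omega1_eq] using Ordinal.iSup_lt_omega_one fun n => omega1_eq ▸ (seq n).2
    refine ⟨⟨_, hlt⟩, fun γ hγ => ?_, Ordinal.le_iSup (fun n => (seq n).1) 0⟩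
    obtain ⟨n, hn⟩ := Ordinal.lt_iSup_iff.1 hγ
    calc f γ < seq (n + 1) := hseq n ▸ hnext _ _ (mem_insert_of_mem _ ⟨γ, hn, rfl⟩)
      _ ≤ _ := Ordinal.le_iSup (fun n => (seq n).1) (n + 1)

theorem isStationary_Ioi (a : CountableOrdinal.{u}) : IsStationary (Ioi a) :=
  (isClub_Ioi a).isStationary cof_ne_aleph0

/-- Ulam's matrix: `e a` injects the ordinals below `a` into `ℕ`; for each `b` some row
`{a | b < a ∧ e a b = n}` is stationary, and rows at distinct `b` with the same `n` are disjoint. -/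
theorem exists_pairwise_disjoint_isStationary :
    ∃ P : ℕ → Set CountableOrdinal.{u}, (∀ n, IsStationary (P n)) ∧ Pairwise (Disjoint on P) := by
  choose e he using fun a : CountableOrdinal.{u} => countable_iff_exists_injOn.1 (countable_Iio a)
  let U (n : ℕ) (b : CountableOrdinal.{u}) : Set CountableOrdinal.{u} := {a | b < a ∧ e a b = n}
  have hU : ∀ b, ∃ n, IsStationary (U n b) := fun b =>
    (isStationary_iUnion_iff_of_countable cof_ne_aleph0).1 <|
      (isStationary_Ioi b).mono fun a ha => mem_iUnion.2 ⟨e a b, ha, rfl⟩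
  choose row hrow using hU
  obtain ⟨m, hm⟩ : ∃ m, (row ⁻¹' {m}).Infinite := by
    by_contra! h
    refine not_countable_univ ((countable_iUnion fun m => (h m).countable).mono ?_)
    exact fun b _ => mem_iUnion.2 ⟨row b, rfl⟩
  let b := hm.natEmbedding
  refine ⟨fun j => U m (b j), fun j => ?_, fun i j hij => ?_⟩
  · simpa [show row (b j) = m from (b j).2] using hrow (b j)
  refine disjoint_left.2 fun a ⟨hia, hi⟩ ⟨hja, hj⟩ => hij (b.injective (Subtype.ext ?_))
  exact he a hia hja (hi.trans hj.symm)

theorem exists_antitone_isStationary :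
    ∃ S : ℕ → Set CountableOrdinal.{u}, (∀ n, IsStationary (S n)) ∧ Antitone S ∧ ⋂ n, S n = ∅ := by
  obtain ⟨P, hP, hdisj⟩ := exists_pairwise_disjoint_isStationary.{u}
  refine ⟨fun n => ⋃ j ∈ Ici n, P j, fun n => (hP n).mono (subset_biUnion_of_mem self_mem_Ici),
    fun m n hmn => biUnion_subset_biUnion_left (Ici_subset_Ici.2 hmn), ?_⟩
  refine eq_empty_of_forall_notMem fun a ha => ?_
  obtain ⟨i, -, hi⟩ := mem_iUnion₂.1 (mem_iInter.1 ha 0)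
  obtain ⟨j, hij, hj⟩ := mem_iUnion₂.1 (mem_iInter.1 ha (i + 1))
  exact disjoint_left.1 (hdisj (Nat.lt_of_succ_le hij).ne) hi hj

end CountableOrdinal

theorem IsStationary.exists_closurePoint {S : Set CountableOrdinal.{u}} (hS : IsStationary S)
    (f : CountableOrdinal.{u} → CountableOrdinal.{u}) (a : CountableOrdinal.{u}) :
    ∃ l ∈ S, a < l ∧ ∀ γ < l, f γ < l := by
  obtain ⟨l, hlS, hla, hl⟩ := hS ((isClub_Ioi a).inter CountableOrdinal.cof_ne_aleph0
    (CountableOrdinal.isClub_setOf_forall_lt f))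
  exact ⟨l, hlS, hla, hl⟩

namespace SouslinTreeData

variable {T : Type*} [PartialOrder T]

def level (τ : SouslinTreeData.{_, u} T) (t : T) : CountableOrdinal.{u} :=
  ⟨τ.height t, τ.height_lt t⟩

theorem level_strictMono (τ : SouslinTreeData.{_, u} T) : StrictMono τ.level :=
  fun s t h => τ.height_mono s t h

theorem level_surjective (τ : SouslinTreeData.{_, u} T) : Surjective τ.level := fun a =>
  let ⟨t, ht⟩ := τ.height_surj a.1 a.2; ⟨t, Subtype.ext ht⟩

theorem exists_lt_level_eq (τ : SouslinTreeData.{_, u} T) {t : T} {a : CountableOrdinal.{u}}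
    (h : a < τ.level t) : ∃ s < t, τ.level s = a :=
  let ⟨s, hst, hs⟩ := τ.pred_exists t a.1 h; ⟨s, hst, Subtype.ext hs⟩

theorem lt_of_le_of_le_of_level_lt (τ : SouslinTreeData.{_, u} T) {m x v : T} (hm : m ≤ v)
    (hx : x ≤ v) (h : τ.level m < τ.level x) : m < x := by
  have hcomp : m ≤ x ∨ x ≤ m := by
    rcases hm.eq_or_lt with rfl | hm
    · exact .inr hx
    rcases hx.eq_or_lt with rfl | hx
    · exact .inl hm.le
    exact τ.pred_linear v m x hm hx
  refine hcomp.elim (fun hmx => hmx.lt_of_ne ?_) fun hxm => ?_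
  · rintro rfl; exact h.false
  · exact absurd (τ.level_strictMono.monotone hxm) h.not_ge

theorem countable_of_isAntichain (τ : SouslinTreeData T) {A : Set T}
    (hA : IsAntichain (· ≤ ·) A) : A.Countable :=
  τ.antichains_countable A fun _ ha _ hb hab => ⟨hA ha hb hab, hA hb ha hab.symm⟩

theorem countable_setOf_level_le (τ : SouslinTreeData.{_, u} T) (a : CountableOrdinal.{u}) :
    {t | τ.level t ≤ a}.Countable := by
  refine (((CountableOrdinal.countable_Iio a).insert a).biUnion
    fun b _ => τ.levels_countable b.1).mono fun t ht => ?_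
  exact mem_biUnion (x := τ.level t) (mem_insert_iff.2 ht.eq_or_lt) rfl

theorem exists_lt_level_of_not_countable (τ : SouslinTreeData.{_, u} T) {B : Set T}
    (hB : ¬ B.Countable) (a : CountableOrdinal.{u}) : ∃ b ∈ B, a < τ.level b := by
  by_contra! h
  exact hB ((τ.countable_setOf_level_le a).mono h)

theorem not_countable_univ (τ : SouslinTreeData T) : ¬ (univ : Set T).Countable := fun h =>
  CountableOrdinal.not_countable_univ <| by
    simpa [τ.level_surjective.range_eq] using h.image τ.level

theorem countable_of_forall_countable_gt (τ : SouslinTreeData T) {B : Set T}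
    (hB : ∀ b ∈ B, {c ∈ B | b < c}.Countable) : B.Countable := by
  have := τ.level_strictMono.wellFoundedLT
  have hM := τ.countable_of_isAntichain (setOfPred_minimal_antichain (· ∈ B))
  refine (hM.biUnion fun m hm => (hB m hm.prop).insert m).mono fun b hb => ?_
  obtain ⟨m, hmb, hm⟩ := exists_minimal_le_of_wellFoundedLT (· ∈ B) b hb
  refine mem_biUnion hm ?_
  rcases hmb.eq_or_lt with rfl | hmb
  exacts [mem_insert _ _, mem_insert_of_mem _ ⟨hb, hmb⟩]

theorem exists_subset_forall_not_countable_gt (τ : SouslinTreeData T) {R : Set T}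
    (hR : ¬ R.Countable) : ∃ A ⊆ R, A.Nonempty ∧ ∀ a ∈ A, ¬ {b ∈ A | a < b}.Countable := by
  set B := {x ∈ R | {y ∈ R | x < y}.Countable}
  have hB : B.Countable := τ.countable_of_forall_countable_gt fun b hb =>
    hb.2.mono fun c hc => show c ∈ R ∧ b < c from ⟨hc.1.1, hc.2⟩
  refine ⟨R \ B, sdiff_subset, nonempty_iff_ne_empty.2 fun h => hR (hB.mono (sdiff_eq_empty.1 h)),
    fun a ha hc => ha.2 ⟨ha.1, (hc.union hB).mono fun y ⟨hyR, hay⟩ => ?_⟩⟩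
  by_cases hyB : y ∈ B
  exacts [.inr hyB, .inl ⟨⟨hyR, hyB⟩, hay⟩]

/-- The minimal elements of `N` form a countable antichain, so their levels are bounded. -/
theorem exists_level_bound_of_forall_exists_le (τ : SouslinTreeData.{_, u} T) {N : Set T}
    (hN : ∀ w, ∃ v ∈ N, w ≤ v) : ∃ δ, ∀ x, δ < τ.level x → ∃ m ∈ N, m < x := by
  have := τ.level_strictMono.wellFoundedLT
  obtain ⟨δ, hδ⟩ := CountableOrdinal.exists_gt_of_countable
    ((τ.countable_of_isAntichain (setOfPred_minimal_antichain (· ∈ N))).image τ.level)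
  refine ⟨δ, fun x hx => ?_⟩
  obtain ⟨v, hvN, hxv⟩ := hN x
  obtain ⟨m, hmv, hm⟩ := exists_minimal_le_of_wellFoundedLT (· ∈ N) v hvN
  exact ⟨m, hm.prop, τ.lt_of_le_of_le_of_level_lt hmv hxv ((hδ _ ⟨m, hm, rfl⟩).trans hx)⟩

theorem exists_Ioc_subset_of_isOpen (τ : SouslinTreeData T) {U : Set T}
    (hU : IsOpen[intervalTopology T] U) {x : T} (hx : x ∈ U) (hmin : ∃ s, s < x) :
    ∃ s < x, Ioc s x ⊆ U := by
  induction hU with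
  | basic V hV =>
    rcases hV with ⟨s, t, rfl⟩ | ⟨t, ht, rfl⟩
    · exact ⟨s, hx.1, fun y hy => ⟨hy.1, hy.2.trans hx.2⟩⟩
    · obtain ⟨s, hs⟩ := hmin
      exact absurd (hx ▸ hs) (ht s)
  | univ =>
    obtain ⟨s, hs⟩ := hmin
    exact ⟨s, hs, subset_univ _⟩
  | inter V W _ _ ihV ihW =>
    obtain ⟨s₁, hs₁, h₁⟩ := ihV hx.1
    obtain ⟨s₂, hs₂, h₂⟩ := ihW hx.2
    rcases τ.pred_linear x s₁ s₂ hs₁ hs₂ with h | h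
    · exact ⟨s₂, hs₂, subset_inter ((Ioc_subset_Ioc_left h).trans h₁) h₂⟩
    · exact ⟨s₁, hs₁, subset_inter h₁ ((Ioc_subset_Ioc_left h).trans h₂)⟩
  | sUnion S _ ih =>
    obtain ⟨V, hV, hxV⟩ := hx
    obtain ⟨s, hs, h⟩ := ih V hV hxV
    exact ⟨s, hs, h.trans (subset_sUnion_of_mem hV)⟩

theorem exists_level_bound_exists_lt (τ : SouslinTreeData.{_, u} T) {A : Set T}
    (hA : ∀ a ∈ A, ¬ {b ∈ A | a < b}.Countable) {S : Set CountableOrdinal.{u}}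
    (hAS : ∀ a ∈ A, τ.level a ∉ S) (γ : CountableOrdinal.{u}) :
    ∃ δ, ∀ x, δ < τ.level x → τ.level x ∈ S → (∃ a ∈ A, x ≤ a) →
      ∃ a ∈ A, a < x ∧ γ < τ.level a := by
  set P := {v | ∀ x, v ≤ x → τ.level x ∈ S → ∃ a ∈ A, a < x ∧ γ < τ.level a}
  obtain ⟨δ, hδ⟩ := τ.exists_level_bound_of_forall_exists_le
    (N := P ∪ {v | ∀ w, v ≤ w → w ∉ P}) fun w => by
      by_cases h : ∃ v ∈ P, w ≤ v
      · obtain ⟨v, hv, hwv⟩ := h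
        exact ⟨v, .inl hv, hwv⟩
      · exact ⟨w, .inr fun v hwv hv => h ⟨v, hv, hwv⟩, le_rfl⟩
  refine ⟨δ, fun x hδx hxS ⟨a₁, ha₁, hxa₁⟩ => ?_⟩
  obtain ⟨m, hm | hm, hmx⟩ := hδ x hδx
  · exact hm x hmx.le hxS
  -- `m` has no extension in `P`, yet its extension `a ∈ A` is one: the extensions of `a` at
  -- levels in `S` lie strictly above `a`, as `A` avoids those levels.
  obtain ⟨a, ⟨haA, ha₁a⟩, hγa⟩ := τ.exists_lt_level_of_not_countable (hA a₁ ha₁) γ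
  have haP : a ∉ P := hm a (hmx.le.trans (hxa₁.trans ha₁a.le))
  simp only [P, mem_ofPred_eq, not_forall] at haP
  obtain ⟨x', hax', hx'S, hx'⟩ := haP
  exact absurd ⟨a, haA, hax'.lt_of_ne (by rintro rfl; exact hAS a haA hx'S), hγa⟩ hx'

theorem exists_level_mem_forall_lt_exists_mem (τ : SouslinTreeData.{_, u} T) {A : Set T}
    (hA₀ : A.Nonempty) (hA : ∀ a ∈ A, ¬ {b ∈ A | a < b}.Countable)
    {S : Set CountableOrdinal.{u}} (hS : IsStationary S) (hAS : ∀ a ∈ A, τ.level a ∉ S) :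
    ∃ x, τ.level x ∈ S ∧ (∃ s, s < x) ∧ ∀ s < x, ∃ a ∈ A, s < a ∧ a < x := by
  choose δ hδ using τ.exists_level_bound_exists_lt hA hAS
  obtain ⟨a₀, ha₀⟩ := hA₀
  obtain ⟨l, hlS, hl₀, hl⟩ := hS.exists_closurePoint δ (τ.level a₀)
  obtain ⟨a₁, ⟨ha₁, ha₀a₁⟩, hla₁⟩ := τ.exists_lt_level_of_not_countable (hA a₀ ha₀) l
  obtain ⟨x, hxa₁, rfl⟩ := τ.exists_lt_level_eq hla₁
  refine ⟨x, hlS, ⟨a₀, τ.lt_of_le_of_le_of_level_lt ha₀a₁.le hxa₁.le hl₀⟩, fun s hsx => ?_⟩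
  obtain ⟨a, haA, hax, hsa⟩ := hδ _ x (hl _ (τ.level_strictMono hsx)) hlS ⟨a₁, ha₁, hxa₁.le⟩
  exact ⟨a, haA, τ.lt_of_le_of_le_of_level_lt hsx.le hax.le hsa, hax⟩

theorem countable_compl_of_isOpen (τ : SouslinTreeData.{_, u} T) {S : Set CountableOrdinal.{u}}
    (hS : IsStationary S) {U : Set T} (hU : IsOpen[intervalTopology T] U)
    (hSU : τ.level ⁻¹' S ⊆ U) : Uᶜ.Countable := by
  by_contra hR
  obtain ⟨A, hAU, hA₀, hA⟩ := τ.exists_subset_forall_not_countable_gt hR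
  obtain ⟨x, hxS, hxmin, hxA⟩ :=
    τ.exists_level_mem_forall_lt_exists_mem hA₀ hA hS fun a ha h => hAU ha (hSU h)
  obtain ⟨s, hsx, hsU⟩ := τ.exists_Ioc_subset_of_isOpen hU (hSU hxS) hxmin
  obtain ⟨a, haA, hsa, hax⟩ := hxA s hsx
  exact hAU haA (hsU ⟨hsa, hax.le⟩)

end SouslinTreeData

/-- No Souslin tree, equipped with the interval topology, is a Δ-space. -/
theorem souslin_tree_not_delta_space {T : Type*} [PartialOrder T]
    (τ : SouslinTreeData T) :
    ¬ @IsDeltaSpace T (intervalTopology T) := by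
  intro hΔ
  obtain ⟨S, hS, hS_anti, hS_empty⟩ := CountableOrdinal.exists_antitone_isStationary
  obtain ⟨V, hV_open, -, hDV, hV_empty⟩ := hΔ (fun n => τ.level ⁻¹' S n)
    (fun n => preimage_mono (hS_anti n.le_succ))
    (by rw [← preimage_iInter, hS_empty, preimage_empty])
  refine τ.not_countable_univ ((countable_iUnion fun n =>
    τ.countable_compl_of_isOpen (hS n) (hV_open n) (hDV n)).mono fun t _ => ?_)
  rw [← compl_iInter, hV_empty, compl_empty]
  trivial
end

section
/- Let D be an infinite set and 𝒜 an almost disjoint family of countably infinite subsets of D, and let Ψ(D,𝒜) be the associated Isbell–Mrówka-type space. Then Ψ(D,𝒜) is a Δ-space if and only if Ψ(D,𝒜) is countably metacompact. -/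
/-- The Isbell–Mrówka-type space `Ψ(D, 𝒜)`, with underlying set `D ⊕ 𝒜`:
points of `D` are isolated, and basic neighborhoods of `A ∈ 𝒜` are
`{A} ∪ (A \ F)` for finite `F ⊆ D`. -/
def psiTopology {D : Type*} (𝒜 : Set (Set D)) : TopologicalSpace (D ⊕ 𝒜) :=
  TopologicalSpace.generateFrom
    ({U | ∃ d : D, U = {Sum.inl d}} ∪
     {U | ∃ (A : 𝒜) (F : Finset D),
        U = insert (Sum.inr A) (Sum.inl '' ((A : Set D) \ (F : Set D)))})

/-- A space is countably metacompact if every decreasing sequence of closed sets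
with empty intersection has a decreasing open expansion with empty
intersection. -/
def CountablyMetacompact (X : Type*) [TopologicalSpace X] : Prop :=
  ∀ D : ℕ → Set X, (∀ n, IsClosed (D n)) → (∀ n, D (n + 1) ⊆ D n) →
    (⋂ n, D n) = ∅ →
    ∃ V : ℕ → Set X, (∀ n, IsOpen (V n)) ∧ (∀ n, V (n + 1) ⊆ V n) ∧
      (∀ n, D n ⊆ V n) ∧ (⋂ n, V n) = ∅

/-!
Every subset of `D` is open in Ψ(D, 𝒜) and every subset of `𝒜` is closed. So for a decreasing
sequence `Sₙ` with empty intersection, countable metacompactness expands the closed traces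
`Sₙ ∩ 𝒜` to decreasing open `Vₙ` with empty intersection, and `Vₙ ∪ (Sₙ ∩ D)` is the required
expansion of `Sₙ`: as both `Vₙ` and `Sₙ ∩ D` decrease, the intersection of these unions is the
union of two empty intersections.
-/

section General

variable {X : Type*} [TopologicalSpace X]

theorem IsDeltaSpace.countablyMetacompact (h : IsDeltaSpace X) : CountablyMetacompact X :=
  fun S _ hdec hempty => h S hdec hempty

theorem CountablyMetacompact.isDeltaSpace_of_subsets_closed_of_subsets_compl_open (K : Set X)
    (hK : ∀ T ⊆ K, IsClosed T) (hKc : ∀ U ⊆ Kᶜ, IsOpen U) (h : CountablyMetacompact X) :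
    IsDeltaSpace X := by
  intro S hdec hempty
  have hS : Antitone S := antitone_nat_of_succ_le hdec
  have htrace_empty : ⋂ n, S n ∩ K = ∅ :=
    Set.subset_empty_iff.mp (hempty ▸ Set.iInter_mono fun n => Set.inter_subset_left)
  obtain ⟨V, hVopen, hVdec, hSV, hVempty⟩ :=
    h (fun n => S n ∩ K) (fun n => hK _ Set.inter_subset_right)
      (fun n => Set.inter_subset_inter_left K (hdec n)) htrace_empty
  have hV : Antitone V := antitone_nat_of_succ_le hVdec
  refine ⟨fun n => V n ∪ (S n \ K), fun n => ?_, fun n => ?_, fun n => ?_, ?_⟩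
  · exact (hVopen n).union (hKc _ fun _ hx => hx.2)
  · exact Set.union_subset_union (hVdec n) (Set.sdiff_subset_sdiff_left (hdec n))
  · intro x hx
    by_cases hxK : x ∈ K
    · exact Or.inl (hSV n ⟨hx, hxK⟩)
    · exact Or.inr ⟨hx, hxK⟩
  · rw [Set.iInter_union_of_antitone hV fun m n hmn => Set.sdiff_subset_sdiff_left (hS hmn),
      hVempty, Set.empty_union]
    exact Set.subset_empty_iff.mp (hempty ▸ Set.iInter_mono fun n => Set.sdiff_subset)

end General

section Psi

variable {D : Type*} {𝒜 : Set (Set D)}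

attribute [local instance] psiTopology

theorem psi_isOpen_singleton_inl (d : D) : IsOpen ({Sum.inl d} : Set (D ⊕ 𝒜)) :=
  TopologicalSpace.GenerateOpen.basic _ (Or.inl ⟨d, rfl⟩)

theorem psi_isOpen_insert_inr (A : 𝒜) (F : Finset D) :
    IsOpen (insert (Sum.inr A) (Sum.inl '' ((A : Set D) \ (F : Set D))) : Set (D ⊕ 𝒜)) :=
  TopologicalSpace.GenerateOpen.basic _ (Or.inr ⟨A, F, rfl⟩)

theorem psi_isOpen_of_subset_range_inl {U : Set (D ⊕ 𝒜)} (hU : U ⊆ Set.range Sum.inl) :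
    IsOpen U := by
  refine isOpen_iff_forall_mem_open.mpr fun x hx => ?_
  obtain ⟨d, rfl⟩ := hU hx
  exact ⟨{Sum.inl d}, Set.singleton_subset_iff.mpr hx, psi_isOpen_singleton_inl d, rfl⟩

theorem psi_isClosed_of_subset_range_inr {T : Set (D ⊕ 𝒜)} (hT : T ⊆ Set.range Sum.inr) :
    IsClosed T := by
  have hinl (d : D) : Sum.inl d ∉ T := fun hd => (hT hd).elim fun _ h => Sum.inr_ne_inl h
  refine ⟨isOpen_iff_forall_mem_open.mpr fun x hx => ?_⟩
  cases x with
  | inl d =>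
    exact ⟨{Sum.inl d}, Set.singleton_subset_iff.mpr hx, psi_isOpen_singleton_inl d, rfl⟩
  | inr A =>
    refine ⟨_, ?_, by simpa using psi_isOpen_insert_inr A ∅, Set.mem_insert _ _⟩
    rintro _ (rfl | ⟨d, _, rfl⟩)
    · exact hx
    · exact hinl d

end Psi

theorem psi_delta_iff_countably_metacompact_general {D : Type*}
    (𝒜 : Set (Set D)) :
    @IsDeltaSpace (D ⊕ 𝒜) (psiTopology 𝒜) ↔
      @CountablyMetacompact (D ⊕ 𝒜) (psiTopology 𝒜) := by
  let _ : TopologicalSpace (D ⊕ 𝒜) := psiTopology 𝒜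
  refine ⟨IsDeltaSpace.countablyMetacompact,
    CountablyMetacompact.isDeltaSpace_of_subsets_closed_of_subsets_compl_open (Set.range Sum.inr)
      (fun _ hT => psi_isClosed_of_subset_range_inr hT) fun U hU => ?_⟩
  exact psi_isOpen_of_subset_range_inl (Set.compl_range_inr ▸ hU)

/-- For an almost disjoint family `𝒜` of countably infinite subsets of an
infinite set `D`, the space `Ψ(D, 𝒜)` is a Δ-space iff it is countably
metacompact. -/
theorem psi_delta_iff_countably_metacompact {D : Type*} [Infinite D]
    (𝒜 : Set (Set D))
    (hctble : ∀ A ∈ 𝒜, A.Countable ∧ A.Infinite)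
    (hAD : ∀ A ∈ 𝒜, ∀ B ∈ 𝒜, A ≠ B → (A ∩ B).Finite) :
    @IsDeltaSpace (D ⊕ 𝒜) (psiTopology 𝒜) ↔
      @CountablyMetacompact (D ⊕ 𝒜) (psiTopology 𝒜) :=
  psi_delta_iff_countably_metacompact_general 𝒜
end

section
/- If a ladder system L on lim(ω₁) is ω-uniformizable — i.e., for every sequence of functions η_α : s_α → ω there is f : ω₁ → ω with f↾s_α =* η_α for all α — then the ladder system space X_L is σ-closed discrete, hence a Q-space. -/
/-- The points of `ω₁`, as a type. -/
def Omega1 : Type 1 := {o : Ordinal // o < omega1}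

/-- The countable limit ordinals, as a type. -/
def LimOmega1 : Type 1 := {o : Ordinal // o < omega1 ∧ Order.IsSuccLimit o}

/-- The ladder system space `X_L` for a ladder system `s`: its underlying set is
`ω₁ × {0} ∪ lim(ω₁) × {1}`, the points of `ω₁` are isolated, and basic
neighborhoods of a limit `α` consist of `α` together with a cofinite subset of
the ladder `s α`. -/
def ladderTopology (s : LimOmega1 → ℕ → Omega1) :
    TopologicalSpace (Omega1 ⊕ LimOmega1) :=
  TopologicalSpace.generateFrom
    ({U | ∃ β : Omega1, U = {Sum.inl β}} ∪
     {U | ∃ (α : LimOmega1) (m : ℕ),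
        U = insert (Sum.inr α) (Sum.inl '' (s α '' {n | m ≤ n}))})

open Set

theorem Set.Finite.preimage_singleton_of_finite_ne_self {α : Type*} {g : α → α}
    (hg : {a | g a ≠ a}.Finite) (b : α) : (g ⁻¹' {b}).Finite :=
  (hg.union (finite_singleton b)).subset fun a (ha : g a = b) => by
    by_cases h : g a = a
    · exact Or.inr (h.symm.trans ha)
    · exact Or.inl h

theorem isGδ_of_iUnion_eq_univ_of_isClosed_subset {X : Type*} [TopologicalSpace X]
    (D : ℕ → Set X) (hcover : ⋃ k, D k = univ) (hclosed : ∀ k, ∀ E ⊆ D k, IsClosed E)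
    (A : Set X) : IsGδ A := by
  have hA : A = ⋂ k, (Aᶜ ∩ D k)ᶜ := by
    ext x
    obtain ⟨k, hk⟩ := mem_iUnion.1 (hcover ▸ mem_univ x)
    simp only [mem_iInter, mem_compl_iff, mem_inter_iff, not_and]
    exact ⟨fun h _ hA => absurd h hA, fun h => by_contra fun hA => h k hA hk⟩
  rw [hA]
  exact .iInter fun k => (hclosed k _ inter_subset_right).isOpen_compl.isGδ

section LadderSpace

variable (s : LimOmega1 → ℕ → Omega1)

def ladderNbhd (α : LimOmega1) (m : ℕ) : Set (Omega1 ⊕ LimOmega1) :=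
  insert (Sum.inr α) (Sum.inl '' (s α '' Ici m))

theorem isOpen_singleton_inl (β : Omega1) :
    @IsOpen _ (ladderTopology s) {Sum.inl β} :=
  TopologicalSpace.GenerateOpen.basic _ (Or.inl ⟨β, rfl⟩)

theorem isOpen_ladderNbhd (α : LimOmega1) (m : ℕ) :
    @IsOpen _ (ladderTopology s) (ladderNbhd s α m) :=
  TopologicalSpace.GenerateOpen.basic _ (Or.inr ⟨α, m, rfl⟩)

/-- `S × {0} ∪ lim(ω₁) × {1}` in the notation of the paper. -/
def withLimits (S : Set Omega1) : Set (Omega1 ⊕ LimOmega1) :=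
  Sum.inl '' S ∪ range Sum.inr

variable {s} {S : Set Omega1}

theorem inl_mem_withLimits {β : Omega1} : Sum.inl β ∈ withLimits S ↔ β ∈ S := by
  simp [withLimits]

theorem inr_mem_withLimits (α : LimOmega1) : Sum.inr α ∈ withLimits S :=
  Or.inr ⟨α, rfl⟩

theorem exists_ladderNbhd_inter_withLimits_eq_singleton {α : LimOmega1}
    (hS : {n | s α n ∈ S}.Finite) :
    ∃ m, ladderNbhd s α m ∩ withLimits S = {Sum.inr α} := by
  obtain ⟨N, hN⟩ := hS.bddAbove
  refine ⟨N + 1, subset_antisymm ?_ ?_⟩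
  · rintro _ ⟨rfl | ⟨_, ⟨n, hn, rfl⟩, rfl⟩, hD⟩
    · rfl
    · exact absurd (hN (inl_mem_withLimits.1 hD)) (by simp only [mem_Ici] at hn; omega)
  · rintro _ rfl
    exact ⟨mem_insert _ _, inr_mem_withLimits α⟩

theorem isClosed_of_subset_withLimits (hS : ∀ α, {n | s α n ∈ S}.Finite)
    {E : Set (Omega1 ⊕ LimOmega1)} (hE : E ⊆ withLimits S) :
    @IsClosed _ (ladderTopology s) E := by
  let := ladderTopology s
  refine isOpen_compl_iff.1 <| isOpen_iff_forall_mem_open.2 ?_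
  rintro (β | α) hx
  · exact ⟨_, singleton_subset_iff.2 hx, isOpen_singleton_inl s β, rfl⟩
  · obtain ⟨m, hm⟩ := exists_ladderNbhd_inter_withLimits_eq_singleton (hS α)
    refine ⟨_, fun y hyN hyE => hx ?_, isOpen_ladderNbhd s α m, mem_insert _ _⟩
    obtain rfl : y = Sum.inr α := hm.subset ⟨hyN, hE hyE⟩
    exact hyE

theorem exists_isOpen_inter_withLimits_eq_singleton
    (hS : ∀ α, {n | s α n ∈ S}.Finite) {x : Omega1 ⊕ LimOmega1}
    (hx : x ∈ withLimits S) :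
    ∃ U, @IsOpen _ (ladderTopology s) U ∧ U ∩ withLimits S = {x} := by
  rcases x with β | α
  · exact ⟨_, isOpen_singleton_inl s β, inter_eq_left.2 (singleton_subset_iff.2 hx)⟩
  · obtain ⟨m, hm⟩ := exists_ladderNbhd_inter_withLimits_eq_singleton (hS α)
    exact ⟨_, isOpen_ladderNbhd s α m, hm⟩

end LadderSpace

theorem omega_uniformizable_sigma_closed_discrete_general
    (s : LimOmega1 → ℕ → Omega1)
    (hunif : ∀ η : LimOmega1 → ℕ → ℕ, ∃ f : Omega1 → ℕ,
      ∀ α : LimOmega1, {n : ℕ | f (s α n) ≠ η α n}.Finite) :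
    (∃ Dn : ℕ → Set (Omega1 ⊕ LimOmega1),
        (⋃ n, Dn n) = Set.univ ∧
        (∀ n, @IsClosed _ (ladderTopology s) (Dn n)) ∧
        (∀ n, ∀ x ∈ Dn n, ∃ U, @IsOpen _ (ladderTopology s) U ∧ U ∩ Dn n = {x})) ∧
      (∀ A : Set (Omega1 ⊕ LimOmega1), @IsGδ _ (ladderTopology s) A) := by
  let := ladderTopology s
  obtain ⟨f, hf⟩ := hunif fun _ n => n
  have hfiber : ∀ k α, {n | s α n ∈ f ⁻¹' {k}}.Finite := fun k α =>
    Set.Finite.preimage_singleton_of_finite_ne_self (g := f ∘ s α) (hf α) k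
  set D : ℕ → Set (Omega1 ⊕ LimOmega1) := fun k => withLimits (f ⁻¹' {k})
  have hcover : ⋃ k, D k = univ := by
    refine eq_univ_of_forall ?_
    rintro (β | α)
    · exact mem_iUnion.2 ⟨f β, inl_mem_withLimits.2 rfl⟩
    · exact mem_iUnion.2 ⟨0, inr_mem_withLimits α⟩
  have hclosed : ∀ k, ∀ E ⊆ D k, IsClosed E := fun k _ hE =>
    isClosed_of_subset_withLimits (hfiber k) hE
  exact ⟨⟨D, hcover, fun k => hclosed k _ subset_rfl, fun k _ hx =>
      exists_isOpen_inter_withLimits_eq_singleton (hfiber k) hx⟩,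
    isGδ_of_iUnion_eq_univ_of_isClosed_subset D hcover hclosed⟩

/-- If a ladder system is ω-uniformizable — every sequence of functions
`η_α : s_α → ω` admits `f : ω₁ → ω` with `f ∘ s_α =* η_α` for all `α` — then
the ladder system space `X_L` is σ-closed discrete, hence a Q-space. -/
theorem omega_uniformizable_sigma_closed_discrete
    (s : LimOmega1 → ℕ → Omega1)
    (hmono : ∀ α : LimOmega1, StrictMono fun n => (s α n).1)
    (hlt : ∀ (α : LimOmega1) (n : ℕ), (s α n).1 < α.1)
    (hcof : ∀ α : LimOmega1, ∀ β < α.1, ∃ n, β < (s α n).1)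
    (hunif : ∀ η : LimOmega1 → ℕ → ℕ, ∃ f : Omega1 → ℕ,
      ∀ α : LimOmega1, {n : ℕ | f (s α n) ≠ η α n}.Finite) :
    (∃ Dn : ℕ → Set (Omega1 ⊕ LimOmega1),
        (⋃ n, Dn n) = Set.univ ∧
        (∀ n, @IsClosed _ (ladderTopology s) (Dn n)) ∧
        (∀ n, ∀ x ∈ Dn n, ∃ U, @IsOpen _ (ladderTopology s) U ∧ U ∩ Dn n = {x})) ∧
      (∀ A : Set (Omega1 ⊕ LimOmega1), @IsGδ _ (ladderTopology s) A) :=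
  omega_uniformizable_sigma_closed_discrete_general s hunif
end
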